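/- arXiv:1912.06476 — 2 statements merged into one kernel-verified Lean document; each statement's English description precedes it below -/
import Mathlib

section
/- Under hypotheses (H1)–(H4) and K ≥ 0, D ≥ 0, C > 0, the fixed stress split scheme satisfies the contraction-type inequality: ‖s‖² + ‖p‖² + (3/C)·K + (3/C)·D + (3/(2C²))·‖ζ‖² − (3/C²)·[(7/2)·‖ζ_p − φ_p‖² + (1/2)·‖φ‖² + (C/3)·⟪s, φ⟫] ≤ (1/2)·‖s₋‖². -/
open scoped RealInnerProductSpace

/-!
Eliminating `K` and `D` with the flow and poromechanics equations and expanding `‖ζ‖²` through the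
fluid-content relation turns the left-hand side into exactly `½‖s₋‖² - ½‖p + s₋‖²`; all terms in
`s` and `φ` cancel against the fixed stress correction.
-/

section

variable {H : Type*} [NormedAddCommGroup H] [InnerProductSpace ℝ H]

theorem norm_add_add_sq_real (x y z : H) :
    ‖x + y + z‖ ^ 2 = ‖x‖ ^ 2 + ‖y‖ ^ 2 + ‖z‖ ^ 2 + 2 * ⟪x, y⟫ + 2 * ⟪x, z⟫ + 2 * ⟪y, z⟫ := by
  rw [norm_add_sq_real, norm_add_sq_real, inner_add_left]
  ring

theorem fluid_content_sq_sub_fixed_stress_correction {C : ℝ} (hC : C ≠ 0) (p s φ : H) :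
    (3 / (2 * C ^ 2)) * ‖C • p + (C / 3) • s + φ‖ ^ 2
      - (3 / C ^ 2) * ((7 / 2) * ‖(C / 3) • s‖ ^ 2 + (1 / 2) * ‖φ‖ ^ 2 + (C / 3) * ⟪s, φ⟫)
      = (3 / 2) * ‖p‖ ^ 2 - ‖s‖ ^ 2 + ⟪s, p⟫ + (3 / C) * ⟪φ, p⟫ := by
  simp only [norm_add_add_sq_real, norm_smul, real_inner_smul_left, real_inner_smul_right,
    mul_pow, Real.norm_eq_abs, sq_abs, real_inner_comm p]
  field_simp
  ring

end

theorem fixed_stress_split_contraction_inequality_general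
    {H : Type*} [NormedAddCommGroup H] [InnerProductSpace ℝ H]
    (C K D : ℝ) (p s sm φ ζ ζp φp : H)
    (hC : 0 < C)
    (H1 : C * ‖p‖ ^ 2 + K + ⟪φ, p⟫ = -(C / 3) * ⟪sm, p⟫)
    (H2 : D + (C / 3) * ⟪s, p⟫ = 0)
    (H3 : ζ = C • p + (C / 3) • s + φ)
    (H4 : ζp = (C / 3) • s + φp) :
    ‖s‖ ^ 2 + ‖p‖ ^ 2 + (3 / C) * K + (3 / C) * D + (3 / (2 * C ^ 2)) * ‖ζ‖ ^ 2
      - (3 / C ^ 2) * ((7 / 2) * ‖ζp - φp‖ ^ 2 + (1 / 2) * ‖φ‖ ^ 2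
          + (C / 3) * ⟪s, φ⟫)
      ≤ (1 / 2) * ‖sm‖ ^ 2 := by
  have hζ := fluid_content_sq_sub_fixed_stress_correction hC.ne' p s φ
  rw [H3, H4, add_sub_cancel_right]
  calc _ = (1 / 2) * ‖sm‖ ^ 2 - (1 / 2) * ‖sm + p‖ ^ 2 := by
        linear_combination (norm := (field_simp; ring))
          (3 / C) * H1 + (3 / C) * H2 + hζ + (1 / 2) * norm_add_sq_real sm p
    _ ≤ (1 / 2) * ‖sm‖ ^ 2 := sub_le_self _ (by positivity)

/-- Contraction-type inequality for the fixed stress split scheme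
(anisotropic poroelastoplasticity coupled with single phase flow). -/
theorem fixed_stress_split_contraction_inequality
    {H : Type*} [NormedAddCommGroup H] [InnerProductSpace ℝ H]
    (C K D : ℝ) (p s sm φ ζ ζp φp : H)
    (hC : 0 < C) (hK : 0 ≤ K) (hD : 0 ≤ D)
    (H1 : C * ‖p‖ ^ 2 + K + ⟪φ, p⟫ = -(C / 3) * ⟪sm, p⟫)
    (H2 : D + (C / 3) * ⟪s, p⟫ = 0)
    (H3 : ζ = C • p + (C / 3) • s + φ)
    (H4 : ζp = (C / 3) • s + φp) :
    ‖s‖ ^ 2 + ‖p‖ ^ 2 + (3 / C) * K + (3 / C) * D + (3 / (2 * C ^ 2)) * ‖ζ‖ ^ 2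
      - (3 / C ^ 2) * ((7 / 2) * ‖ζp - φp‖ ^ 2 + (1 / 2) * ‖φ‖ ^ 2
          + (C / 3) * ⟪s, φ⟫)
      ≤ (1 / 2) * ‖sm‖ ^ 2 :=
  fixed_stress_split_contraction_inequality_general C K D p s sm φ ζ ζp φp hC H1 H2 H3 H4
end

section
/- Under hypotheses (H1), (H2), (H3) and C > 0, the combined flow–poromechanics identity holds: (C/2)·‖p‖² + K + D + (1/(2C))·‖ζ‖² − (C/18)·‖s‖² − (1/(2C))·‖φ‖² − (1/3)·⟪s, φ⟫ = −(C/3)·⟪s₋, p⟫. -/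
open scoped RealInnerProductSpace

/-! Expanding `‖ζ‖² / (2C)` with (H3) produces exactly the terms that turn the left-hand side
into the sum of the left-hand sides of (H1) and (H2). -/

section

variable {H : Type*} [NormedAddCommGroup H] [InnerProductSpace ℝ H]

theorem norm_smul_add_sq (a : ℝ) (x y : H) :
    ‖a • x + y‖ ^ 2 = a ^ 2 * ‖x‖ ^ 2 + 2 * a * ⟪x, y⟫ + ‖y‖ ^ 2 := by
  rw [norm_add_sq_real, norm_smul, real_inner_smul_left, mul_pow, Real.norm_eq_abs, sq_abs]
  ring

theorem one_div_two_mul_norm_smul_add_sq {c : ℝ} (hc : c ≠ 0) (x y : H) :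
    (1 / (2 * c)) * ‖c • x + y‖ ^ 2 = (c / 2) * ‖x‖ ^ 2 + ⟪x, y⟫ + (1 / (2 * c)) * ‖y‖ ^ 2 := by
  rw [norm_smul_add_sq]
  field_simp

end

/-- Combined flow–poromechanics identity. -/
theorem combined_flow_poromechanics_identity
    {H : Type*} [NormedAddCommGroup H] [InnerProductSpace ℝ H]
    (C K D : ℝ) (p s sm φ ζ : H) (hC : 0 < C)
    (H1 : C * ‖p‖ ^ 2 + K + ⟪φ, p⟫ = -(C / 3) * ⟪sm, p⟫)
    (H2 : D + (C / 3) * ⟪s, p⟫ = 0)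
    (H3 : ζ = C • p + (C / 3) • s + φ) :
    (C / 2) * ‖p‖ ^ 2 + K + D + (1 / (2 * C)) * ‖ζ‖ ^ 2
      - (C / 18) * ‖s‖ ^ 2 - (1 / (2 * C)) * ‖φ‖ ^ 2 - (1 / 3) * ⟪s, φ⟫
      = -(C / 3) * ⟪sm, p⟫ := by
  have hζ : (1 / (2 * C)) * ‖ζ‖ ^ 2 = (C / 2) * ‖p‖ ^ 2 + (C / 3) * ⟪s, p⟫ + ⟪φ, p⟫
      + (C / 18) * ‖s‖ ^ 2 + (1 / 3) * ⟪s, φ⟫ + (1 / (2 * C)) * ‖φ‖ ^ 2 := by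
    rw [H3, add_assoc, one_div_two_mul_norm_smul_add_sq hC.ne', norm_smul_add_sq,
      inner_add_right, real_inner_smul_right, real_inner_comm s, real_inner_comm φ]
    field_simp
    ring
  linarith
end
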